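/- arXiv:2411.05736 — 6 statements merged into one kernel-verified Lean document; each statement's English description precedes it below -/
import Mathlib

section
/- For every s ∈ [0,1], within each open interval (s E_{k-1}, s E_k) for 1 ≤ k ≤ M-1, the secular equation 1/(1-s) = (1/N) ∑_{j=0}^{M-1} d_j/(s E_j - λ) (for s ∈ (0,1)) has exactly one solution λ. -/
open Finset Filter Topology

/-- For `s ∈ (0,1)`, within each open interval `(s E_{k-1}, s E_k)` with `1 ≤ k ≤ M-1`,
the secular equation `1/(1-s) = (1/N) ∑_j d_j/(s E_j - λ)` has exactly one solution `λ`. -/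
theorem secular_equation_unique_solution_in_each_interval {M N : ℕ}
    (E : Fin M → ℝ) (hE : StrictMono E)
    (d : Fin M → ℝ) (hd : ∀ k, 0 < d k) (hsum : ∑ k, d k = N)
    (s : ℝ) (hs : s ∈ Set.Ioo (0 : ℝ) 1) :
    ∀ (j : ℕ) (hj : j + 1 < M),
      ∃! lam : ℝ,
        lam ∈ Set.Ioo (s * E ⟨j, Nat.lt_of_succ_lt hj⟩) (s * E ⟨j + 1, hj⟩) ∧
          1 / (1 - s) = (1 / (N : ℝ)) * ∑ k, d k / (s * E k - lam) := by
  intro j hj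
  set j' : Fin M := ⟨j, Nat.lt_of_succ_lt hj⟩ with hj'
  set j'' : Fin M := ⟨j + 1, hj⟩ with hj''
  set a : ℝ := s * E j' with ha
  set b : ℝ := s * E j'' with hb
  set f : ℝ → ℝ := fun x => ∑ k, d k / (s * E k - x) with hf
  have hs0 : (0:ℝ) < s := hs.1
  have hs1 : s < 1 := hs.2
  have h1s : (1:ℝ) - s ≠ 0 := by linarith
  have hab : a < b := by
    have : E j' < E j'' := hE (by simp [Fin.lt_def, hj', hj''])
    exact (mul_lt_mul_iff_right₀ hs0).2 this
  have hN : (0:ℝ) < N := by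
    rw [← hsum]
    exact Finset.sum_pos (fun k _ => hd k) ⟨j', mem_univ _⟩
  have hN0 : (N:ℝ) ≠ 0 := ne_of_gt hN
  set C : ℝ := N / (1 - s) with hC
  -- denominators have a fixed sign on the interval
  have hEk : ∀ k : Fin M, s * E k ≤ a ∨ b ≤ s * E k := by
    intro k
    rcases le_or_gt (k : ℕ) j with h | h
    · exact Or.inl (mul_le_mul_of_nonneg_left (hE.monotone (by simp [Fin.le_def, hj', h]))
        hs0.le)
    · exact Or.inr (mul_le_mul_of_nonneg_left (hE.monotone (by simp [Fin.le_def, hj'']; omega))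
        hs0.le)
  have hne : ∀ k : Fin M, ∀ x ∈ Set.Ioo a b, s * E k - x ≠ 0 := by
    intro k x hx
    rcases hEk k with h | h
    · have : s * E k - x < 0 := by have := hx.1; linarith
      exact ne_of_lt this
    · have : 0 < s * E k - x := by have := hx.2; linarith
      exact ne_of_gt this
  -- strict monotonicity of f on the interval
  have hmono : StrictMonoOn f (Set.Ioo a b) := by
    intro x hx y hy hxy
    apply Finset.sum_lt_sum_of_nonempty ⟨j', mem_univ _⟩
    intro k _
    set p : ℝ := s * E k - x with hp
    set q : ℝ := s * E k - y with hq
    have hqp : q < p := by simp [hp, hq]; linarith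
    have hp0 : p ≠ 0 := hne k x hx
    have hq0 : q ≠ 0 := hne k y hy
    have hpq : 0 < p * q := by
      rcases hEk k with h | h
      · have hpneg : p < 0 := by have := hx.1; simp [hp]; linarith
        have hqneg : q < 0 := by have := hy.1; simp [hq]; linarith
        exact mul_pos_of_neg_of_neg hpneg hqneg
      · have hppos : 0 < p := by have := hx.2; simp [hp]; linarith
        have hqpos : 0 < q := by have := hy.2; simp [hq]; linarith
        exact mul_pos hppos hqpos
    have hkey : d k / q - d k / p = d k * (p - q) / (p * q) := by
      field_simp
    have hpos : 0 < d k / q - d k / p := by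
      rw [hkey]
      exact div_pos (mul_pos (hd k) (by linarith)) hpq
    linarith
  -- continuity of f on the interval
  have hcont : ContinuousOn f (Set.Ioo a b) := by
    apply continuousOn_finset_sum
    intro k _
    exact ContinuousOn.div continuousOn_const
      ((continuous_const.sub continuous_id).continuousOn) (fun x hx => hne k x hx)
  -- f tends to -∞ at the left endpoint
  have hbot : Tendsto f (𝓝[>] a) atBot := by
    have hsub : Tendsto (fun x : ℝ => x - a) (𝓝[>] a) (𝓝[>] 0) := by
      have h0 : Tendsto (fun x : ℝ => x - a) (𝓝 a) (𝓝 0) := by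
        simpa using (continuous_sub_right a).tendsto a
      apply tendsto_nhdsWithin_of_tendsto_nhds_of_eventually_within
      · exact h0.mono_left nhdsWithin_le_nhds
      · filter_upwards [self_mem_nhdsWithin] with x hx using sub_pos.2 (Set.mem_Ioi.1 hx)
    have hinv : Tendsto (fun x : ℝ => (x - a)⁻¹) (𝓝[>] a) atTop :=
      tendsto_inv_nhdsGT_zero.comp hsub
    have hterm : Tendsto (fun x : ℝ => d j' / (s * E j' - x)) (𝓝[>] a) atBot := by
      have h1 : Tendsto (fun x : ℝ => d j' * (x - a)⁻¹) (𝓝[>] a) atTop :=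
        hinv.const_mul_atTop (hd j')
      have h2 : Tendsto (fun x : ℝ => -(d j' * (x - a)⁻¹)) (𝓝[>] a) atBot :=
        tendsto_neg_atTop_atBot.comp h1
      refine h2.congr fun x => ?_
      rw [div_eq_mul_inv, show s * E j' - x = -(x - a) by rw [ha]; ring, inv_neg, mul_neg]
    have hg : Tendsto (fun x : ℝ => ∑ k ∈ univ.erase j', d k / (s * E k - x)) (𝓝[>] a)
        (𝓝 (∑ k ∈ univ.erase j', d k / (s * E k - a))) := by
      apply tendsto_finset_sum
      intro k hk
      have hk' : k ≠ j' := (Finset.mem_erase.1 hk).1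
      have hden : s * E k - a ≠ 0 := by
        rw [ha]
        exact sub_ne_zero.2 fun h => hk' (hE.injective (mul_left_cancel₀ (ne_of_gt hs0) h))
      exact (ContinuousAt.div continuousAt_const
        ((continuous_const.sub continuous_id).continuousAt) hden).tendsto.mono_left
        nhdsWithin_le_nhds
    refine (hterm.atBot_add hg).congr fun x => ?_
    exact Finset.add_sum_erase univ (fun k => d k / (s * E k - x)) (mem_univ j')
  -- f tends to +∞ at the right endpoint
  have htop : Tendsto f (𝓝[<] b) atTop := by
    have hsub : Tendsto (fun x : ℝ => b - x) (𝓝[<] b) (𝓝[>] 0) := by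
      have h0 : Tendsto (fun x : ℝ => b - x) (𝓝 b) (𝓝 0) := by
        simpa using (continuous_sub_left b).tendsto b
      apply tendsto_nhdsWithin_of_tendsto_nhds_of_eventually_within
      · exact h0.mono_left nhdsWithin_le_nhds
      · filter_upwards [self_mem_nhdsWithin] with x hx using sub_pos.2 (Set.mem_Iio.1 hx)
    have hinv : Tendsto (fun x : ℝ => (b - x)⁻¹) (𝓝[<] b) atTop :=
      tendsto_inv_nhdsGT_zero.comp hsub
    have hterm : Tendsto (fun x : ℝ => d j'' / (s * E j'' - x)) (𝓝[<] b) atTop := by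
      have h1 : Tendsto (fun x : ℝ => d j'' * (b - x)⁻¹) (𝓝[<] b) atTop :=
        hinv.const_mul_atTop (hd j'')
      refine h1.congr fun x => ?_
      rw [div_eq_mul_inv, hb]
    have hg : Tendsto (fun x : ℝ => ∑ k ∈ univ.erase j'', d k / (s * E k - x)) (𝓝[<] b)
        (𝓝 (∑ k ∈ univ.erase j'', d k / (s * E k - b))) := by
      apply tendsto_finset_sum
      intro k hk
      have hk' : k ≠ j'' := (Finset.mem_erase.1 hk).1
      have hden : s * E k - b ≠ 0 := by
        rw [hb]
        exact sub_ne_zero.2 fun h => hk' (hE.injective (mul_left_cancel₀ (ne_of_gt hs0) h))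
      exact (ContinuousAt.div continuousAt_const
        ((continuous_const.sub continuous_id).continuousAt) hden).tendsto.mono_left
        nhdsWithin_le_nhds
    refine (hterm.atTop_add hg).congr fun x => ?_
    exact Finset.add_sum_erase univ (fun k => d k / (s * E k - x)) (mem_univ j'')
  -- pick points where f < C and C < f
  obtain ⟨x₁, hx₁C, hx₁⟩ :=
    ((hbot.eventually (eventually_lt_atBot C)).and
      (eventually_of_mem (Ioo_mem_nhdsGT_of_mem ⟨le_refl a, hab⟩) fun x hx => hx)).exists
  obtain ⟨x₂, hx₂C, hx₂⟩ :=
    ((htop.eventually (eventually_gt_atTop C)).and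
      (eventually_of_mem (Ioo_mem_nhdsLT_of_mem ⟨hab, le_refl b⟩) fun x hx => hx)).exists
  have hx12 : x₁ < x₂ := by
    by_contra h
    push_neg at h
    rcases eq_or_lt_of_le h with h | h
    · rw [h] at hx₂C; linarith
    · have := hmono hx₂ hx₁ h; linarith
  -- intermediate value theorem
  have hIcc : Set.Icc x₁ x₂ ⊆ Set.Ioo a b := fun x hx =>
    ⟨lt_of_lt_of_le hx₁.1 hx.1, lt_of_le_of_lt hx.2 hx₂.2⟩
  obtain ⟨lam, hlam, hflam⟩ :=
    intermediate_value_Ioo hx12.le (hcont.mono hIcc) (⟨hx₁C, hx₂C⟩ : C ∈ Set.Ioo (f x₁) (f x₂))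
  have hlam' : lam ∈ Set.Ioo a b :=
    ⟨lt_trans hx₁.1 hlam.1, lt_trans hlam.2 hx₂.2⟩
  -- relate the two forms of the equation
  have hiff : ∀ F : ℝ, (1 / (1 - s) = (1 / (N : ℝ)) * F) ↔ F = C := by
    intro F
    rw [hC]
    constructor
    · intro h
      rw [eq_div_iff h1s]
      field_simp at h
      linarith
    · intro h
      rw [h]
      field_simp
  refine ⟨lam, ⟨hlam', (hiff _).2 hflam⟩, ?_⟩
  rintro y ⟨hy, hyeq⟩
  exact hmono.injOn hy hlam' (((hiff _).1 hyeq).trans hflam.symm)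
end

section
/- With the setup above, let λ_0(s) denote the smallest eigenvalue of H(s) and λ_1(s) the smallest eigenvalue of H(s) that is ≥ s E_0. Let s* = A_1/(A_1+1). Then for all s ∈ [0, s*), the spectral gap satisfies λ_1(s) - λ_0(s) ≥ (A_1/A_2)·(s* - s)/(1 - s*). -/
open Matrix Finset

/-- The initial state `|ψ₀⟩ = ∑_k √(d_k/N) |k⟩`. -/
noncomputable def psi0 {M : ℕ} (d : Fin M → ℝ) (N : ℕ) : Fin M → ℂ :=
  fun k => ((Real.sqrt (d k / N) : ℝ) : ℂ)

/-- The adiabatic Hamiltonian `H(s) = -(1-s)|ψ₀⟩⟨ψ₀| + s H_z`. -/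
noncomputable def Hadiab {M : ℕ} (E d : Fin M → ℝ) (N : ℕ) (s : ℝ) :
    Matrix (Fin M) (Fin M) ℂ :=
  (-(1 - s) : ℂ) • vecMulVec (psi0 d N) (star (psi0 d N)) +
    (s : ℂ) • diagonal (fun k => (E k : ℂ))

/-- `A_1 = (1/N) ∑_{k=1}^{M-1} d_k/(E_k - E_0)`. -/
noncomputable def A1spec {M : ℕ} [NeZero M] (E d : Fin M → ℝ) (N : ℕ) : ℝ :=
  (1 / (N : ℝ)) * ∑ k ∈ univ.erase 0, d k / (E k - E 0)

/-- `A_2 = (1/N) ∑_{k=1}^{M-1} d_k/(E_k - E_0)²`. -/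
noncomputable def A2spec {M : ℕ} [NeZero M] (E d : Fin M → ℝ) (N : ℕ) : ℝ :=
  (1 / (N : ℝ)) * ∑ k ∈ univ.erase 0, d k / (E k - E 0) ^ 2

open scoped ComplexOrder

/-! The ground energy is bounded above by the Rayleigh quotient of the ansatz
`φ_k = √d_k / (E_k - E_0)`, which evaluates to `s E_0 - ((1-s) A₁² - s A₁) / A₂`, while
`λ₁ ≥ s E_0` by definition; subtracting gives `λ₁ - λ₀ ≥ A₁ ((1-s) A₁ - s) / A₂`, which is
the claimed bound rewritten in terms of `s* = A₁/(A₁+1)`. -/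

theorem Matrix.IsHermitian.mul_re_dotProduct_self_le {n 𝕜 : Type*} [Fintype n] [DecidableEq n]
    [RCLike 𝕜] {A : Matrix n n 𝕜} (hA : A.IsHermitian) {μ : ℝ}
    (hμ : ∀ ν : ℝ, (∃ v : n → 𝕜, v ≠ 0 ∧ A *ᵥ v = (ν : 𝕜) • v) → μ ≤ ν) (x : n → 𝕜) :
    μ * RCLike.re (star x ⬝ᵥ x) ≤ RCLike.re (star x ⬝ᵥ (A *ᵥ x)) := by
  have hB : (A - (μ : 𝕜) • 1).IsHermitian :=
    hA.sub (isHermitian_one.smul (RCLike.conj_ofReal μ))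
  have hpsd : (A - (μ : 𝕜) • 1).PosSemidef := by
    refine hB.posSemidef_iff_eigenvalues_nonneg.2 fun i => ?_
    have hv := hB.mulVec_eigenvectorBasis i
    rw [sub_mulVec, smul_mulVec, one_mulVec, sub_eq_iff_eq_add] at hv
    have := hμ (hB.eigenvalues i + μ)
      ⟨_, mt (WithLp.ofLp_eq_zero 2).1 (hB.eigenvectorBasis.orthonormal.ne_zero i), by
        rw [hv, RCLike.ofReal_add, add_smul, RCLike.real_smul_eq_coe_smul (K := 𝕜)]⟩
    rw [Pi.zero_apply]
    linarith
  have := RCLike.nonneg_iff.1 (hpsd.dotProduct_mulVec_nonneg x)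
  rw [sub_mulVec, smul_mulVec, one_mulVec, dotProduct_sub, dotProduct_smul, smul_eq_mul,
    map_sub, RCLike.re_ofReal_mul] at this
  linarith [this.1]

section Hadiab

variable {M N : ℕ} (E d : Fin M → ℝ)

theorem Hadiab_isHermitian (s : ℝ) : (Hadiab E d N s).IsHermitian := by
  have hreal : ∀ x : ℝ, IsSelfAdjoint (x : ℂ) := Complex.conj_ofReal
  refine IsHermitian.add ((posSemidef_vecMulVec_self_star _).isHermitian.smul ?_)
    ((isHermitian_diagonal_of_self_adjoint _ (funext fun k => hreal (E k))).smul (hreal s))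
  exact_mod_cast hreal (-(1 - s))

theorem dotProduct_Hadiab_mulVec_ofReal (s : ℝ) (r : Fin M → ℝ) :
    star (fun k => (r k : ℂ)) ⬝ᵥ (Hadiab E d N s *ᵥ fun k => (r k : ℂ)) =
      ((-(1 - s) * (∑ k, √(d k / N) * r k) ^ 2 + s * ∑ k, E k * r k ^ 2 : ℝ) : ℂ) := by
  have hψr : star (psi0 d N) ⬝ᵥ (fun k => (r k : ℂ)) = ((∑ k, √(d k / N) * r k : ℝ) : ℂ) := by
    simp [dotProduct, psi0]
  have hrψ : star (fun k => (r k : ℂ)) ⬝ᵥ psi0 d N = ((∑ k, √(d k / N) * r k : ℝ) : ℂ) := by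
    simp [dotProduct, psi0, mul_comm]
  have hdiag : star (fun k => (r k : ℂ)) ⬝ᵥ (diagonal (fun k => (E k : ℂ)) *ᵥ fun k => (r k : ℂ)) =
      ((∑ k, E k * r k ^ 2 : ℝ) : ℂ) := by
    simp [dotProduct, mulVec_diagonal, sq, mul_left_comm]
  rw [Hadiab, add_mulVec, smul_mulVec, smul_mulVec, vecMulVec_mulVec, hψr, op_smul_eq_smul,
    dotProduct_add, dotProduct_smul, dotProduct_smul, dotProduct_smul, hrψ, hdiag]
  push_cast
  ring

end Hadiab

section Ansatz

variable {M N : ℕ} [NeZero M] (E : Fin M → ℝ) {d : Fin M → ℝ}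

/-- The entry at `k = 0` is `√d_0 / 0 = 0`, so this is the ansatz supported on `k ≥ 1`. -/
noncomputable def ansatz (d : Fin M → ℝ) : Fin M → ℝ :=
  fun k => √(d k) / (E k - E 0)

theorem A1spec_eq_sum :
    A1spec E d N = (1 / N) * ∑ k, d k / (E k - E 0) := by
  rw [A1spec, Finset.sum_erase _ (by simp)]

theorem A2spec_eq_sum :
    A2spec E d N = (1 / N) * ∑ k, d k / (E k - E 0) ^ 2 := by
  rw [A2spec, Finset.sum_erase _ (by simp)]

theorem A1spec_nonneg {E : Fin M → ℝ} (hE : Monotone E) (hd : ∀ k, 0 ≤ d k) :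
    0 ≤ A1spec E d N :=
  mul_nonneg (by positivity) <| Finset.sum_nonneg fun k _ =>
    div_nonneg (hd k) (sub_nonneg.2 (hE (Fin.zero_le k)))

theorem A2spec_nonneg (hd : ∀ k, 0 ≤ d k) : 0 ≤ A2spec E d N :=
  mul_nonneg (by positivity) <| Finset.sum_nonneg fun k _ => div_nonneg (hd k) (sq_nonneg _)

theorem sum_ansatz_sq (hd : ∀ k, 0 ≤ d k) :
    ∑ k, ansatz E d k ^ 2 = ∑ k, d k / (E k - E 0) ^ 2 :=
  Finset.sum_congr rfl fun k _ => by rw [ansatz, div_pow, Real.sq_sqrt (hd k)]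

theorem sum_sqrt_mul_ansatz (hd : ∀ k, 0 ≤ d k) :
    ∑ k, √(d k / N) * ansatz E d k = (∑ k, d k / (E k - E 0)) / √N := by
  rw [Finset.sum_div]
  refine Finset.sum_congr rfl fun k _ => ?_
  rw [ansatz, Real.sqrt_div (hd k), div_mul_div_comm, Real.mul_self_sqrt (hd k), div_div,
    mul_comm]

theorem sum_mul_ansatz_sq (hd : ∀ k, 0 ≤ d k) :
    ∑ k, E k * ansatz E d k ^ 2 = E 0 * ∑ k, ansatz E d k ^ 2 + ∑ k, d k / (E k - E 0) := by
  rw [Finset.mul_sum, ← Finset.sum_add_distrib]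
  refine Finset.sum_congr rfl fun k _ => ?_
  rw [ansatz, div_pow, Real.sq_sqrt (hd k)]
  rcases eq_or_ne (E k - E 0) 0 with h | h
  · simp [sub_eq_zero.1 h]
  · field_simp
    ring

theorem mul_A2spec_le_of_mem_lowerBounds (hd : ∀ k, 0 ≤ d k) (s lam0 : ℝ)
    (h0 : lam0 ∈ lowerBounds {lam : ℝ |
        ∃ v : Fin M → ℂ, v ≠ 0 ∧ (Hadiab E d N s).mulVec v = (lam : ℂ) • v}) :
    lam0 * A2spec E d N ≤
      s * E 0 * A2spec E d N - A1spec E d N * ((1 - s) * A1spec E d N - s) := by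
  have hnorm : star (fun k => (ansatz E d k : ℂ)) ⬝ᵥ (fun k => (ansatz E d k : ℂ)) =
      ((∑ k, ansatz E d k ^ 2 : ℝ) : ℂ) := by
    simp [dotProduct, sq]
  have hray := (Hadiab_isHermitian E d s).mul_re_dotProduct_self_le (fun _ hν => h0 hν)
    (fun k => (ansatz E d k : ℂ))
  rw [hnorm, dotProduct_Hadiab_mulVec_ofReal, RCLike.re_to_complex, RCLike.re_to_complex,
    Complex.ofReal_re, Complex.ofReal_re, sum_sqrt_mul_ansatz E hd, sum_mul_ansatz_sq E hd,
    sum_ansatz_sq E hd, div_pow, Real.sq_sqrt (Nat.cast_nonneg N)] at hray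
  rw [A1spec_eq_sum, A2spec_eq_sum]
  linear_combination mul_le_mul_of_nonneg_left hray (by positivity : (0 : ℝ) ≤ 1 / N)

end Ansatz

theorem gap_left_of_avoided_crossing_general {M N : ℕ} [NeZero M]
    (E : Fin M → ℝ) (hE : StrictMono E)
    (d : Fin M → ℝ) (hd : ∀ k, 0 < d k)
    (s : ℝ)
    (lam0 lam1 : ℝ)
    (h0 : IsLeast {lam : ℝ |
        ∃ v : Fin M → ℂ, v ≠ 0 ∧ (Hadiab E d N s).mulVec v = (lam : ℂ) • v} lam0)
    (h1 : IsLeast {lam : ℝ |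
        (∃ v : Fin M → ℂ, v ≠ 0 ∧ (Hadiab E d N s).mulVec v = (lam : ℂ) • v) ∧
          s * E 0 ≤ lam} lam1) :
    lam1 - lam0 ≥ (A1spec E d N / A2spec E d N) *
      (A1spec E d N / (A1spec E d N + 1) - s) /
        (1 - A1spec E d N / (A1spec E d N + 1)) := by
  have hlam0 := mul_A2spec_le_of_mem_lowerBounds E (fun k => (hd k).le) s lam0 h0.2
  have hlam1 : s * E 0 ≤ lam1 := h1.1.2
  rcases (A2spec_nonneg E (N := N) fun k => (hd k).le).eq_or_lt with hb | hb
  · -- with `x / 0 = 0` the bound degenerates to `λ₀ ≤ λ₁`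
    rw [← hb, div_zero, zero_mul, zero_div, ge_iff_le, sub_nonneg]
    exact h0.2 h1.1.1
  set a := A1spec E d N
  set b := A2spec E d N
  have ha : 0 ≤ a := A1spec_nonneg hE.monotone fun k => (hd k).le
  have hrhs : a / b * (a / (a + 1) - s) / (1 - a / (a + 1)) = a * ((1 - s) * a - s) / b := by
    field_simp
    ring
  rw [ge_iff_le, hrhs, div_le_iff₀ hb]
  linarith [mul_le_mul_of_nonneg_right hlam1 hb.le]

/-- **Gap bound to the left of the avoided crossing.** Let `λ₀(s)` be the smallest
eigenvalue of `H(s)` and `λ₁(s)` the smallest eigenvalue of `H(s)` that is `≥ s E_0`.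
With `s* = A₁/(A₁+1)`, for all `s ∈ [0, s*)`,
`λ₁(s) - λ₀(s) ≥ (A₁/A₂)·(s* - s)/(1 - s*)`. -/
theorem gap_left_of_avoided_crossing {M N : ℕ} [NeZero M]
    (E : Fin M → ℝ) (hE : StrictMono E)
    (d : Fin M → ℝ) (hd : ∀ k, 0 < d k) (hsum : ∑ k, d k = N) (hN : 0 < N)
    (s : ℝ) (hs0 : 0 ≤ s) (hs1 : s < A1spec E d N / (A1spec E d N + 1))
    (lam0 lam1 : ℝ)
    (h0 : IsLeast {lam : ℝ |
        ∃ v : Fin M → ℂ, v ≠ 0 ∧ (Hadiab E d N s).mulVec v = (lam : ℂ) • v} lam0)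
    (h1 : IsLeast {lam : ℝ |
        (∃ v : Fin M → ℂ, v ≠ 0 ∧ (Hadiab E d N s).mulVec v = (lam : ℂ) • v) ∧
          s * E 0 ≤ lam} lam1) :
    lam1 - lam0 ≥ (A1spec E d N / A2spec E d N) *
      (A1spec E d N / (A1spec E d N + 1) - s) /
        (1 - A1spec E d N / (A1spec E d N + 1)) :=
  gap_left_of_avoided_crossing_general E hE d hd s lam0 lam1 h0 h1
end

section
/- Let H(s) be a continuously differentiable path of Hermitian matrices, λ_0(s) an eigenvalue with spectral projector P(s) onto its eigenspace (of locally constant rank), and suppose the rest of the spectrum is at distance at least g(s) > 0 from λ_0(s). Then ‖P'(s)‖ ≤ 2‖H'(s)‖/g(s). -/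
/-!
Differentiating `P² = P` and `[H, P] = 0` shows that `X = P' P` satisfies `P X = 0`,
`P' = X + X*` and `(H - λ₀) X = -(1 - P) H' P`. Since `X` maps into the orthogonal complement
of the `λ₀`-eigenspace, on which `H - λ₀` is bounded below by the gap `g`, this gives
`g ‖X‖ ≤ ‖(1 - P) H' P‖ ≤ ‖H'‖`, and hence `‖P'‖ ≤ 2 ‖X‖ ≤ 2 ‖H'‖ / g`.
-/

open Module.End

section Derivatives

variable {𝕜 𝔸 : Type*} [NontriviallyNormedField 𝕜] [NormedRing 𝔸] [NormedAlgebra 𝕜 𝔸]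
  {H P : 𝕜 → 𝔸} {H' P' : 𝔸} {s : 𝕜}

theorem HasDerivAt.eq_mul_add_mul_of_isIdempotentElem (hP : HasDerivAt P P' s)
    (hidem : ∀ t, IsIdempotentElem (P t)) : P' = P' * P s + P s * P' := by
  have hPP : P * P = P := funext fun t => (hidem t).eq
  have hPP' := hP.mul hP
  rw [hPP] at hPP'
  exact hP.unique hPP'

theorem HasDerivAt.mul_add_mul_eq_of_commute (hH : HasDerivAt H H' s) (hP : HasDerivAt P P' s)
    (hcomm : ∀ t, Commute (H t) (P t)) : H' * P s + H s * P' = P' * H s + P s * H' := by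
  have hHP : H * P = P * H := funext fun t => (hcomm t).eq
  have hHP' := hH.mul hP
  rw [hHP] at hHP'
  exact hHP'.unique (hP.mul hH)

theorem HasDerivAt.isSelfAdjoint [StarRing 𝕜] [TrivialStar 𝕜] [StarRing 𝔸] [StarModule 𝕜 𝔸]
    [ContinuousStar 𝔸] (hP : HasDerivAt P P' s) (hsa : ∀ t, IsSelfAdjoint (P t)) :
    IsSelfAdjoint P' := by
  have hstar : (fun t => star (P t)) = P := funext fun t => (hsa t).star_eq
  have hP'star := hP.star
  rw [hstar] at hP'star
  exact hP'star.unique hP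

end Derivatives

section Algebra

variable {R : Type*} [Ring R]

theorem IsIdempotentElem.mul_mul_eq_zero_of_eq_mul_add_mul {a d : R} (ha : IsIdempotentElem a)
    (hd : d = d * a + a * d) : a * d * a = 0 := by
  have h : a * d * a = a * d * a + a * d * a :=
    calc a * d * a = a * (d * a + a * d) * a := by rw [← hd]
      _ = a * d * (a * a) + (a * a) * d * a := by noncomm_ring
      _ = a * d * a + a * d * a := by rw [ha.eq]
  exact left_eq_add.mp h

theorem IsIdempotentElem.mul_mul_sub_smul_eq {S : Type*} [Monoid S] [DistribMulAction S R]
    [SMulCommClass S R R] {a d h h' : R} {c : S} (ha : IsIdempotentElem a) (hha : h * a = c • a)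
    (hcomm : h' * a + h * d = d * h + a * h') :
    h * (d * a) - c • (d * a) = -((1 - a) * h' * a) := by
  have h₁ : h' * a + h * (d * a) = c • (d * a) + a * h' * a := by
    have := congrArg (· * a) hcomm
    simp only [add_mul, mul_assoc, ha.eq, hha, mul_smul_comm] at this
    simpa only [mul_assoc] using this
  have h₂ : h * (d * a) - c • (d * a) = a * h' * a - h' * a := by
    rw [sub_eq_sub_iff_add_eq_add, add_comm, h₁, add_comm]
  rw [h₂]
  noncomm_ring

theorem IsSelfAdjoint.commute_of_mul_eq_smul {S : Type*} [CommSemiring S] [StarRing S]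
    [Module S R] [StarRing R] [StarModule S R] {h a : R} {c : S} (hh : IsSelfAdjoint h)
    (ha : IsSelfAdjoint a) (hc : IsSelfAdjoint c) (hha : h * a = c • a) : Commute h a := by
  have hah : a * h = c • a := by
    simpa only [star_mul, hh.star_eq, ha.star_eq, star_smul, hc.star_eq] using congrArg star hha
  exact hha.trans hah.symm

theorem IsStarProjection.norm_one_sub_mul_mul_le {A : Type*} [NormedRing A] [StarRing A]
    [CStarRing A] {p : A} (hp : IsStarProjection p) (x : A) : ‖(1 - p) * x * p‖ ≤ ‖x‖ :=
  calc ‖(1 - p) * x * p‖ ≤ ‖1 - p‖ * ‖x‖ * ‖p‖ := norm_mul₃_le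
    _ ≤ 1 * ‖x‖ * 1 := by gcongr; exacts [hp.one_sub.norm_le, hp.norm_le]
    _ = ‖x‖ := by ring

end Algebra

section SpectralGap

variable {𝕜 E : Type*} [RCLike 𝕜] [NormedAddCommGroup E] [InnerProductSpace 𝕜 E]

theorem LinearMap.IsSymmetric.mem_orthogonal_of_apply_eq_zero {P : E →ₗ[𝕜] E}
    (hP : P.IsSymmetric) {K : Submodule 𝕜 E} (hK : ∀ v ∈ K, P v = v) {w : E} (hw : P w = 0) :
    w ∈ Kᗮ := by
  intro v hv
  rw [← hK v hv, hP, hw, inner_zero_right]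

/-- Expanding `w` in an eigenbasis of `T`, the coefficients along the eigenvalue `c` vanish and
all others get multiplied by at least `g` in modulus. -/
theorem LinearMap.IsSymmetric.mul_norm_le_norm_sub_smul [FiniteDimensional 𝕜 E]
    {T : E →ₗ[𝕜] E} (hT : T.IsSymmetric) {c : 𝕜} {g : ℝ} (hg : 0 ≤ g)
    (hgap : ∀ μ, HasEigenvalue T μ → μ ≠ c → g ≤ ‖μ - c‖) {w : E}
    (hw : w ∈ (eigenspace T c)ᗮ) : g * ‖w‖ ≤ ‖T w - c • w‖ := by
  set b := hT.eigenvectorBasis rfl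
  have hcoord : ∀ i, g * ‖b.repr w i‖ ≤ ‖b.repr (T w - c • w) i‖ := by
    intro i
    have hrepr : b.repr (T w - c • w) i = (hT.eigenvalues rfl i - c) * b.repr w i := by
      rw [map_sub, map_smul, PiLp.sub_apply, PiLp.smul_apply,
        hT.eigenvectorBasis_apply_self_apply, smul_eq_mul]
      ring
    rw [hrepr, norm_mul]
    by_cases hμ : (hT.eigenvalues rfl i : 𝕜) = c
    · have hb : b i ∈ eigenspace T c :=
        mem_eigenspace_iff.mpr (hμ ▸ hT.apply_eigenvectorBasis rfl i)
      rw [b.repr_apply_apply, Submodule.inner_right_of_mem_orthogonal hb hw]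
      simp
    · exact mul_le_mul_of_nonneg_right (hgap _ (hT.hasEigenvalue_eigenvalues rfl i) hμ)
        (norm_nonneg _)
  have hsq : (g * ‖w‖) ^ 2 ≤ ‖T w - c • w‖ ^ 2 := by
    rw [mul_pow, ← b.repr.norm_map w, ← b.repr.norm_map (T w - c • w), EuclideanSpace.norm_sq_eq,
      EuclideanSpace.norm_sq_eq, Finset.mul_sum]
    gcongr with i
    rw [← mul_pow]
    exact pow_le_pow_left₀ (by positivity) (hcoord i) 2
  exact (pow_le_pow_iff_left₀ (by positivity) (norm_nonneg _) two_ne_zero).mp hsq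

theorem ContinuousLinearMap.mul_opNorm_le_opNorm_comp_sub_smul [FiniteDimensional 𝕜 E]
    {F : Type*} [SeminormedAddCommGroup F] [NormedSpace 𝕜 F] {T : E →L[𝕜] E}
    (hT : (T : E →ₗ[𝕜] E).IsSymmetric) {c : 𝕜} {g : ℝ} (hg : 0 ≤ g)
    (hgap : ∀ μ ∈ spectrum 𝕜 T, μ ≠ c → g ≤ ‖μ - c‖) {X : F →L[𝕜] E}
    (hX : ∀ v, X v ∈ (eigenspace (T : E →ₗ[𝕜] E) c)ᗮ) : g * ‖X‖ ≤ ‖T ∘L X - c • X‖ := by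
  have := FiniteDimensional.complete 𝕜 E
  rcases hg.eq_or_lt with rfl | hg
  · simp
  have hgap' : ∀ μ, HasEigenvalue (T : E →ₗ[𝕜] E) μ → μ ≠ c → g ≤ ‖μ - c‖ :=
    fun μ hμ => hgap μ (by rw [spectrum_eq (f := T)]; exact hμ.mem_spectrum)
  rw [← le_div_iff₀' hg]
  refine X.opNorm_le_bound (by positivity) fun v => ?_
  rw [div_mul_eq_mul_div, le_div_iff₀' hg]
  calc g * ‖X v‖ ≤ ‖T (X v) - c • X v‖ :=
        hT.mul_norm_le_norm_sub_smul hg.le hgap' (hX v)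
    _ = ‖(T ∘L X - c • X) v‖ := rfl
    _ ≤ ‖T ∘L X - c • X‖ * ‖v‖ := le_opNorm _ _

end SpectralGap

theorem spectral_projector_deriv_bound_general {n : ℕ}
    (H H' P P' : ℝ → (EuclideanSpace ℂ (Fin n) →L[ℂ] EuclideanSpace ℂ (Fin n)))
    (lam0 g : ℝ → ℝ)
    (hHderiv : ∀ s, HasDerivAt H (H' s) s)
    (hHsa : ∀ s, ContinuousLinearMap.adjoint (H s) = H s)
    (hPsa : ∀ s, ContinuousLinearMap.adjoint (P s) = P s)
    (hPidem : ∀ s, P s ∘L P s = P s)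
    (hPderiv : ∀ s, HasDerivAt P (P' s) s)
    (heig : ∀ s, H s ∘L P s = lam0 s • P s)
    (hfull : ∀ s, ∀ v, H s v = lam0 s • v → P s v = v)
    (hg : ∀ s, 0 < g s)
    (hgap : ∀ s, ∀ μ ∈ spectrum ℂ (H s), μ ≠ (lam0 s : ℂ) → g s ≤ ‖μ - (lam0 s : ℂ)‖)
    (s : ℝ) :
    ‖P' s‖ ≤ 2 * ‖H' s‖ / g s := by
  have hHsa' : ∀ t, IsSelfAdjoint (H t) :=
    fun t => ContinuousLinearMap.isSelfAdjoint_iff'.mpr (hHsa t)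
  have hPproj : ∀ t, IsStarProjection (P t) :=
    fun t => ⟨hPidem t, ContinuousLinearMap.isSelfAdjoint_iff'.mpr (hPsa t)⟩
  have heig' : ∀ t, H t * P t = (lam0 t : ℂ) • P t := fun t =>
    (heig t).trans (Complex.coe_smul (lam0 t) (P t)).symm
  have hcomm : ∀ t, Commute (H t) (P t) := fun t =>
    (hHsa' t).commute_of_mul_eq_smul (hPproj t).isSelfAdjoint (Complex.conj_ofReal _) (heig' t)
  have hd := (hPderiv s).eq_mul_add_mul_of_isIdempotentElem fun t => (hPproj t).isIdempotentElem
  have hP'sa := (hPderiv s).isSelfAdjoint fun t => (hPproj t).isSelfAdjoint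
  set X := P' s * P s
  have hsplit : P' s = X + star X := by
    rwa [star_mul, hP'sa.star_eq, (hPproj s).isSelfAdjoint.star_eq]
  have hPX : P s * X = 0 := by
    rw [← mul_assoc]; exact (hPproj s).isIdempotentElem.mul_mul_eq_zero_of_eq_mul_add_mul hd
  have hsylv : H s * X - (lam0 s : ℂ) • X = -((1 - P s) * H' s * P s) :=
    (hPproj s).isIdempotentElem.mul_mul_sub_smul_eq (heig' s)
      ((hHderiv s).mul_add_mul_eq_of_commute (hPderiv s) hcomm)
  have hXorth : ∀ v, X v ∈ (eigenspace (H s : _ →ₗ[ℂ] _) (lam0 s))ᗮ := fun v =>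
    (hPproj s).isSelfAdjoint.isSymmetric.mem_orthogonal_of_apply_eq_zero
      (fun u hu => hfull s u ((mem_eigenspace_iff.mp hu).trans (Complex.coe_smul _ _)))
      (show (P s * X) v = 0 by rw [hPX, zero_apply])
  have hXbound : g s * ‖X‖ ≤ ‖H' s‖ :=
    calc g s * ‖X‖ ≤ ‖H s ∘L X - (lam0 s : ℂ) • X‖ :=
          ContinuousLinearMap.mul_opNorm_le_opNorm_comp_sub_smul (hHsa' s).isSymmetric (hg s).le
            (hgap s) hXorth
      _ = ‖(1 - P s) * H' s * P s‖ := by rw [← ContinuousLinearMap.mul_def, hsylv, norm_neg]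
      _ ≤ ‖H' s‖ := (hPproj s).norm_one_sub_mul_mul_le _
  have hP'bound : ‖P' s‖ ≤ 2 * ‖X‖ :=
    calc ‖P' s‖ ≤ ‖X‖ + ‖star X‖ := hsplit ▸ norm_add_le _ _
      _ = 2 * ‖X‖ := by rw [two_mul, norm_star X]
  rw [le_div_iff₀ (hg s)]
  linarith [mul_le_mul_of_nonneg_right hP'bound (hg s).le]

/-- **First derivative bound on the spectral projector.** Let `H(s)` be a continuously
differentiable path of Hermitian operators, `λ₀(s)` an eigenvalue with spectral
projector `P(s)` onto its eigenspace, and suppose the rest of the spectrum of `H(s)`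
is at distance at least `g(s) > 0` from `λ₀(s)`. Then `‖P'(s)‖ ≤ 2‖H'(s)‖/g(s)`. -/
theorem spectral_projector_deriv_bound {n : ℕ}
    (H H' P P' : ℝ → (EuclideanSpace ℂ (Fin n) →L[ℂ] EuclideanSpace ℂ (Fin n)))
    (lam0 g : ℝ → ℝ)
    (hHderiv : ∀ s, HasDerivAt H (H' s) s)
    (hH'cont : Continuous H')
    (hHsa : ∀ s, ContinuousLinearMap.adjoint (H s) = H s)
    (hPsa : ∀ s, ContinuousLinearMap.adjoint (P s) = P s)
    (hPidem : ∀ s, P s ∘L P s = P s)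
    (hPderiv : ∀ s, HasDerivAt P (P' s) s)
    (heig : ∀ s, H s ∘L P s = lam0 s • P s)
    (hfull : ∀ s, ∀ v, H s v = lam0 s • v → P s v = v)
    (hg : ∀ s, 0 < g s)
    (hgap : ∀ s, ∀ μ ∈ spectrum ℂ (H s), μ ≠ (lam0 s : ℂ) → g s ≤ ‖μ - (lam0 s : ℂ)‖)
    (s : ℝ) :
    ‖P' s‖ ≤ 2 * ‖H' s‖ / g s :=
  spectral_projector_deriv_bound_general H H' P P' lam0 g hHderiv hHsa hPsa hPidem hPderiv heig
    hfull hg hgap s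
end

section
/- Let H(s) be a twice continuously differentiable path of Hermitian matrices with an isolated eigenvalue λ_0(s) whose distance to the rest of the spectrum is at least g(s) > 0, and let P(s) be the corresponding spectral projector. Then ‖P''(s)‖ ≤ 8‖H'(s)‖²/g(s)² + 2‖H''(s)‖/g(s). -/
/-!
Differentiating `P² = P` and `H P = P H` twice gives algebraic relations at `s` between
`P, P', P''` and `A = H - λ₀(s)`, `H'`, `H''`. With `Q = 1 - P`, sandwiching them between `Q` and
`P` (where `A P = P A = 0` kills most terms) expresses `A (Q P' P)` and `A (Q P'' P)` through `H'`,
`H''` and `e = ‖Q P' P‖`, while the diagonal blocks `P P'' P` and `Q P'' Q` are products of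
`Q P' P` with its adjoint, of norm at most `2 e²`. The spectral gap gives `g ‖Q X‖ ≤ ‖A Q X‖`,
hence `e ≤ ‖H'‖ / g` and `‖Q P'' P‖ ≤ (4 ‖H'‖ e + ‖H''‖) / g`. The off-diagonal part
`P P'' Q + Q P'' P` of the self-adjoint `P''` has norm `‖Q P'' P‖` (Pythagoras across
`ran P ⊕ ran Q`), and summing the blocks gives `‖P''‖ ≤ 8 ‖H'‖² / g² + ‖H''‖ / g`.
-/

open scoped InnerProductSpace

section Leibniz

variable {R : Type*} [NormedRing R] [NormedAlgebra ℝ R]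

theorem leibniz_eq_of_mul_eq {f g u v : ℝ → R} {f' g' u' v' : R} {s : ℝ} (h : f * g = u * v)
    (hf : HasDerivAt f f' s) (hg : HasDerivAt g g' s) (hu : HasDerivAt u u' s)
    (hv : HasDerivAt v v' s) :
    f' * g s + f s * g' = u' * v s + u s * v' := by
  have hfg := hf.mul hg
  rw [h] at hfg
  exact hfg.unique (hu.mul hv)

theorem leibniz_second_eq_of_mul_eq {f g u v f' g' u' v' : ℝ → R} {f'' g'' u'' v'' : R} {s : ℝ}
    (h : f * g = u * v)
    (hf : ∀ t, HasDerivAt f (f' t) t) (hg : ∀ t, HasDerivAt g (g' t) t)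
    (hu : ∀ t, HasDerivAt u (u' t) t) (hv : ∀ t, HasDerivAt v (v' t) t)
    (hf' : HasDerivAt f' f'' s) (hg' : HasDerivAt g' g'' s)
    (hu' : HasDerivAt u' u'' s) (hv' : HasDerivAt v' v'' s) :
    f'' * g s + 2 • (f' s * g' s) + f s * g'' = u'' * v s + 2 • (u' s * v' s) + u s * v'' := by
  have h' : f' * g + f * g' = u' * v + u * v' :=
    funext fun t => leibniz_eq_of_mul_eq h (hf t) (hg t) (hu t) (hv t)
  have hfg := (hf'.mul (hg s)).add ((hf s).mul hg')
  rw [h'] at hfg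
  have := hfg.unique ((hu'.mul (hv s)).add ((hu s).mul hv'))
  rw [two_nsmul, two_nsmul]
  convert this using 1 <;> abel

theorem deriv_relations_of_isIdempotentElem {P P' : ℝ → R} {P'' : R} {s : ℝ}
    (hP : ∀ t, IsIdempotentElem (P t)) (hd : ∀ t, HasDerivAt P (P' t) t)
    (hd' : HasDerivAt P' P'' s) :
    P' s * P s + P s * P' s = P' s ∧ P'' * P s + 2 • (P' s * P' s) + P s * P'' = P'' := by
  have hPP : P * P = P * 1 := funext fun t => (hP t).eq.trans (mul_one _).symm
  have h1 (t : ℝ) : HasDerivAt (1 : ℝ → R) 0 t := hasDerivAt_const t 1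
  constructor
  · simpa using leibniz_eq_of_mul_eq hPP (hd s) (hd s) (hd s) (h1 s)
  · simpa using leibniz_second_eq_of_mul_eq hPP hd hd hd h1 hd' hd' hd' (hasDerivAt_const s 0)

theorem deriv_relations_of_commute {A P A' P' : ℝ → R} {A'' P'' : R} {s : ℝ}
    (hAP : ∀ t, Commute (A t) (P t)) (hA : ∀ t, HasDerivAt A (A' t) t)
    (hP : ∀ t, HasDerivAt P (P' t) t) (hA' : HasDerivAt A' A'' s) (hP' : HasDerivAt P' P'' s) :
    A' s * P s + A s * P' s = P' s * A s + P s * A' s ∧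
      A'' * P s + 2 • (A' s * P' s) + A s * P'' = P'' * A s + 2 • (P' s * A' s) + P s * A'' := by
  have hc : A * P = P * A := funext fun t => (hAP t).eq
  exact ⟨leibniz_eq_of_mul_eq hc (hA s) (hP s) (hP s) (hA s),
    leibniz_second_eq_of_mul_eq hc hA hP hP hA hA' hP' hP' hA'⟩

end Leibniz

theorem IsSelfAdjoint.of_hasDerivAt {F : Type*} [NormedAddCommGroup F] [NormedSpace ℝ F]
    [StarAddMonoid F] [StarModule ℝ F] [ContinuousStar F] {f : ℝ → F} {f' : F} {s : ℝ}
    (hf : ∀ t, IsSelfAdjoint (f t)) (hd : HasDerivAt f f' s) : IsSelfAdjoint f' := by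
  have hstar := hd.star
  simp only [(hf _).star_eq] at hstar
  exact hstar.unique hd

theorem IsSelfAdjoint.commute_of_mul_eq_smul_s9 {R : Type*} [Ring R] [StarRing R] [Module ℝ R]
    [StarModule ℝ R] {h p : R} (hh : IsSelfAdjoint h) (hp : IsSelfAdjoint p) {r : ℝ}
    (heig : h * p = r • p) : Commute h p :=
  calc h * p = star (r • p) := by rw [heig, star_smul, star_trivial, hp.star_eq]
    _ = p * h := by rw [← heig, star_mul, hh.star_eq, hp.star_eq]

section Peirce

-- `_of_tangent`: `d * p + p * d = d`, the relation obtained by differentiating `P * P = P`.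

variable {R : Type*} [Ring R] {p d d₂ a b c c' x : R}

theorem IsIdempotentElem.mul_mul_eq_zero_of_tangent (hp : IsIdempotentElem p)
    (hd : d * p + p * d = d) : p * d * p = 0 := by
  linear_combination (norm := noncomm_ring) p * hd * p - p * d * hp.eq - hp.eq * d * p

theorem IsIdempotentElem.one_sub_mul_mul_one_sub_eq_zero_of_tangent (hp : IsIdempotentElem p)
    (hd : d * p + p * d = d) : (1 - p) * d * (1 - p) = 0 :=
  hp.one_sub.mul_mul_eq_zero_of_tangent (by linear_combination (norm := noncomm_ring) -hd)

theorem IsIdempotentElem.mul_one_sub_mul_mul_eq (hp : IsIdempotentElem p) (hap : a * p = 0)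
    (hpa : p * a = 0) (h : b * p + c + a * x = x * a + c' + p * b) :
    a * ((1 - p) * x * p) = (1 - p) * (c' - c - b) * p := by
  linear_combination (norm := noncomm_ring) (1 - p) * h * p - hap * x * p + hpa * x * p -
    (1 - p) * b * hp.eq + (1 - p) * x * hap - hp.eq * b * p

theorem IsIdempotentElem.mul_mul_eq_of_tangent (hp : IsIdempotentElem p)
    (hd : d * p + p * d = d) (hd₂ : d₂ * p + 2 • (d * d) + p * d₂ = d₂) :
    p * d₂ * p = -(2 • (p * d * (1 - p) * ((1 - p) * d * p))) := by
  have h0 := hp.mul_mul_eq_zero_of_tangent hd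
  linear_combination (norm := noncomm_ring) p * hd₂ * p - p * d₂ * hp.eq - hp.eq * d₂ * p -
    2 • (h0 * d * p) + 2 • (p * d * hp.eq * d * p)

theorem IsIdempotentElem.one_sub_mul_mul_one_sub_eq_of_tangent (hp : IsIdempotentElem p)
    (hd : d * p + p * d = d) (hd₂ : d₂ * p + 2 • (d * d) + p * d₂ = d₂) :
    (1 - p) * d₂ * (1 - p) = 2 • ((1 - p) * d * p * (p * d * (1 - p))) := by
  have h0 := hp.one_sub_mul_mul_one_sub_eq_zero_of_tangent hd
  linear_combination (norm := noncomm_ring) -((1 - p) * hd₂ * (1 - p)) - (1 - p) * d₂ * hp.eq -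
    hp.eq * d₂ * (1 - p) + 2 • (h0 * d * (1 - p)) - 2 • ((1 - p) * d * hp.eq * d * (1 - p))

theorem IsStarProjection.star_one_sub_mul_mul [StarRing R] (hp : IsStarProjection p)
    (hx : IsSelfAdjoint x) : star ((1 - p) * x * p) = p * x * (1 - p) := by
  rw [star_mul, star_mul, star_sub, star_one, hp.isSelfAdjoint.star_eq, hx.star_eq, mul_assoc]

end Peirce

section CStarRing

variable {R : Type*} [NormedRing R] [StarRing R] [CStarRing R] {p d d₂ a a₁ a₂ : R} {g : ℝ}

theorem IsStarProjection.norm_mul_left_le (hp : IsStarProjection p) (x : R) : ‖p * x‖ ≤ ‖x‖ :=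
  (norm_mul_le _ _).trans (mul_le_of_le_one_left (norm_nonneg _) (hp.norm_le p))

theorem IsStarProjection.norm_mul_right_le (hp : IsStarProjection p) (x : R) : ‖x * p‖ ≤ ‖x‖ :=
  (norm_mul_le _ _).trans (mul_le_of_le_one_right (norm_nonneg _) (hp.norm_le p))

theorem IsStarProjection.norm_offDiag_deriv_le (hp : IsStarProjection p) (hg : 0 < g)
    (hgap : ∀ y, g * ‖(1 - p) * y‖ ≤ ‖a * ((1 - p) * y)‖) (hap : a * p = 0) (hpa : p * a = 0)
    (hc : a₁ * p + a * d = d * a + p * a₁) :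
    ‖(1 - p) * d * p‖ ≤ ‖a₁‖ / g := by
  have key := hp.isIdempotentElem.mul_one_sub_mul_mul_eq hap hpa
    (c := 0) (c' := 0) (by simpa using hc)
  rw [le_div_iff₀' hg, mul_assoc]
  calc g * ‖(1 - p) * (d * p)‖ ≤ ‖a * ((1 - p) * d * p)‖ := by rw [mul_assoc]; exact hgap _
    _ = ‖(1 - p) * a₁ * p‖ := by rw [key, sub_self, zero_sub, mul_neg, neg_mul, norm_neg]
    _ ≤ ‖a₁‖ := (hp.norm_mul_right_le _).trans (hp.one_sub.norm_mul_left_le _)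

theorem IsStarProjection.norm_offDiag_secondDeriv_le (hp : IsStarProjection p) (hg : 0 < g)
    (hgap : ∀ y, g * ‖(1 - p) * y‖ ≤ ‖a * ((1 - p) * y)‖) (hap : a * p = 0) (hpa : p * a = 0)
    (hd : d * p + p * d = d)
    (hc : a₂ * p + 2 • (a₁ * d) + a * d₂ = d₂ * a + 2 • (d * a₁) + p * a₂) :
    ‖(1 - p) * d₂ * p‖ ≤ (4 * ‖a₁‖ * ‖(1 - p) * d * p‖ + ‖a₂‖) / g := by
  have hpdp := hp.isIdempotentElem.mul_mul_eq_zero_of_tangent hd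
  have hqdq := hp.isIdempotentElem.one_sub_mul_mul_one_sub_eq_zero_of_tangent hd
  have key : a * ((1 - p) * d₂ * p) =
      2 • ((1 - p) * d * p * (a₁ * p) - (1 - p) * a₁ * ((1 - p) * d * p)) - (1 - p) * a₂ * p := by
    rw [hp.isIdempotentElem.mul_one_sub_mul_mul_eq hap hpa hc]
    linear_combination (norm := noncomm_ring) 2 • (hqdq * a₁ * p) - 2 • ((1 - p) * a₁ * hpdp)
  rw [le_div_iff₀' hg]
  calc g * ‖(1 - p) * d₂ * p‖ ≤ ‖a * ((1 - p) * d₂ * p)‖ := by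
        rw [mul_assoc (1 - p)]; exact hgap _
    _ ≤ 2 * (‖(1 - p) * d * p‖ * ‖a₁‖ + ‖a₁‖ * ‖(1 - p) * d * p‖) + ‖a₂‖ := by
        rw [key]
        refine (norm_sub_le _ _).trans (add_le_add (norm_nsmul_le.trans ?_) ?_)
        · push_cast
          gcongr
          refine (norm_sub_le _ _).trans (add_le_add ?_ ?_)
          · exact (norm_mul_le _ _).trans (by gcongr; exact hp.norm_mul_right_le _)
          · exact (norm_mul_le _ _).trans (by gcongr; exact hp.one_sub.norm_mul_left_le _)
        · exact (hp.norm_mul_right_le _).trans (hp.one_sub.norm_mul_left_le _)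
    _ = 4 * ‖a₁‖ * ‖(1 - p) * d * p‖ + ‖a₂‖ := by ring

theorem IsStarProjection.norm_diag_secondDeriv_le (hp : IsStarProjection p)
    (hdsa : IsSelfAdjoint d) (hd : d * p + p * d = d)
    (hd₂ : d₂ * p + 2 • (d * d) + p * d₂ = d₂) :
    ‖p * d₂ * p‖ ≤ 2 * ‖(1 - p) * d * p‖ ^ 2 ∧
      ‖(1 - p) * d₂ * (1 - p)‖ ≤ 2 * ‖(1 - p) * d * p‖ ^ 2 := by
  have hadj : ‖p * d * (1 - p)‖ = ‖(1 - p) * d * p‖ := by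
    rw [← hp.star_one_sub_mul_mul hdsa, norm_star]
  rw [hp.isIdempotentElem.mul_mul_eq_of_tangent hd hd₂,
    hp.isIdempotentElem.one_sub_mul_mul_one_sub_eq_of_tangent hd hd₂, norm_neg]
  constructor <;>
  · refine norm_nsmul_le.trans ?_
    push_cast
    gcongr
    refine (norm_mul_le _ _).trans_eq ?_
    rw [hadj, sq]

end CStarRing

section Operator

variable {E : Type*} [NormedAddCommGroup E] [InnerProductSpace ℂ E] [CompleteSpace E]
  {p : E →L[ℂ] E}

theorem IsStarProjection.inner_apply_one_sub_apply (hp : IsStarProjection p) (x y : E) :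
    ⟪p x, (1 - p) y⟫_ℂ = 0 := by
  rw [← ContinuousLinearMap.adjoint_inner_right, ← ContinuousLinearMap.star_eq_adjoint,
    hp.isSelfAdjoint.star_eq, ← mul_apply_eq_comp, hp.isIdempotentElem.mul_one_sub_self,
    zero_apply, inner_zero_right]

theorem IsStarProjection.norm_add_one_sub_mul_self (hp : IsStarProjection p) (x y : E) :
    ‖p x + (1 - p) y‖ * ‖p x + (1 - p) y‖ = ‖p x‖ * ‖p x‖ + ‖(1 - p) y‖ * ‖(1 - p) y‖ :=
  norm_add_sq_eq_norm_sq_add_norm_sq_of_inner_eq_zero (𝕜 := ℂ) _ _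
    (hp.inner_apply_one_sub_apply x y)

theorem IsStarProjection.norm_offDiag_add_le_max (hp : IsStarProjection p) (X : E →L[ℂ] E) :
    ‖p * X * (1 - p) + (1 - p) * X * p‖ ≤ max ‖p * X * (1 - p)‖ ‖(1 - p) * X * p‖ := by
  set M := max ‖p * X * (1 - p)‖ ‖(1 - p) * X * p‖
  refine ContinuousLinearMap.opNorm_le_bound _ (le_max_of_le_left (norm_nonneg _)) fun v => ?_
  have hY : ‖p (X ((1 - p) v))‖ ≤ M * ‖(1 - p) v‖ := by
    change ‖(p * X * (1 - p)) v‖ ≤ _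
    rw [← hp.isIdempotentElem.one_sub.mul_mul_self (p * X), mul_apply_eq_comp]
    exact (ContinuousLinearMap.le_opNorm _ _).trans (by gcongr; exact le_max_left _ _)
  have hZ : ‖(1 - p) (X (p v))‖ ≤ M * ‖p v‖ := by
    change ‖((1 - p) * X * p) v‖ ≤ _
    rw [← hp.isIdempotentElem.mul_mul_self ((1 - p) * X), mul_apply_eq_comp]
    exact (ContinuousLinearMap.le_opNorm _ _).trans (by gcongr; exact le_max_right _ _)
  have hv := hp.norm_add_one_sub_mul_self v v
  rw [show p v + (1 - p) v = v by simp] at hv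
  refine nonneg_le_nonneg_of_sq_le_sq (by positivity) ?_
  have hW : (p * X * (1 - p) + (1 - p) * X * p) v = p (X ((1 - p) v)) + (1 - p) (X (p v)) := rfl
  rw [hW, hp.norm_add_one_sub_mul_self]
  calc _ ≤ (M * ‖(1 - p) v‖) * (M * ‖(1 - p) v‖) + (M * ‖p v‖) * (M * ‖p v‖) := by gcongr
    _ = (M * ‖v‖) * (M * ‖v‖) := by linear_combination M ^ 2 * hv.symm

theorem IsStarProjection.norm_le_diag_add_offDiag (hp : IsStarProjection p) {X : E →L[ℂ] E}
    (hX : IsSelfAdjoint X) :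
    ‖X‖ ≤ ‖p * X * p‖ + ‖(1 - p) * X * (1 - p)‖ + ‖(1 - p) * X * p‖ := by
  have hsplit : X = (p * X * p + (1 - p) * X * (1 - p)) + (p * X * (1 - p) + (1 - p) * X * p) := by
    noncomm_ring
  calc ‖X‖ ≤ ‖p * X * p + (1 - p) * X * (1 - p)‖ + ‖p * X * (1 - p) + (1 - p) * X * p‖ := by
        conv_lhs => rw [hsplit]
        exact norm_add_le _ _
    _ ≤ ‖p * X * p‖ + ‖(1 - p) * X * (1 - p)‖ + max ‖p * X * (1 - p)‖ ‖(1 - p) * X * p‖ :=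
        add_le_add (norm_add_le _ _) (hp.norm_offDiag_add_le_max X)
    _ = _ := by rw [← hp.star_one_sub_mul_mul hX, norm_star, max_self]

theorem IsStarProjection.norm_secondDeriv_le_of_gap {d d₂ a a₁ a₂ : E →L[ℂ] E} {g : ℝ}
    (hp : IsStarProjection p) (hdsa : IsSelfAdjoint d) (hd₂sa : IsSelfAdjoint d₂) (hg : 0 < g)
    (hgap : ∀ y, g * ‖(1 - p) * y‖ ≤ ‖a * ((1 - p) * y)‖) (hap : a * p = 0) (hpa : p * a = 0)
    (hd : d * p + p * d = d) (hd₂ : d₂ * p + 2 • (d * d) + p * d₂ = d₂)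
    (hc : a₁ * p + a * d = d * a + p * a₁)
    (hc₂ : a₂ * p + 2 • (a₁ * d) + a * d₂ = d₂ * a + 2 • (d * a₁) + p * a₂) :
    ‖d₂‖ ≤ 8 * ‖a₁‖ ^ 2 / g ^ 2 + ‖a₂‖ / g := by
  set e := ‖(1 - p) * d * p‖
  have he : e ≤ ‖a₁‖ / g := hp.norm_offDiag_deriv_le hg hgap hap hpa hc
  have he₂ : e ^ 2 ≤ ‖a₁‖ ^ 2 / g ^ 2 := by
    rw [← div_pow]; exact pow_le_pow_left₀ (norm_nonneg _) he 2
  obtain ⟨hdiag, hdiag'⟩ := hp.norm_diag_secondDeriv_le hdsa hd hd₂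
  have hoff := hp.norm_offDiag_secondDeriv_le hg hgap hap hpa hd hc₂
  calc ‖d₂‖ ≤ 2 * e ^ 2 + 2 * e ^ 2 + (4 * ‖a₁‖ * e + ‖a₂‖) / g := by
        linarith [hp.norm_le_diag_add_offDiag hd₂sa]
    _ ≤ 2 * (‖a₁‖ ^ 2 / g ^ 2) + 2 * (‖a₁‖ ^ 2 / g ^ 2) + (4 * ‖a₁‖ * (‖a₁‖ / g) + ‖a₂‖) / g := by
        gcongr
    _ = 8 * ‖a₁‖ ^ 2 / g ^ 2 + ‖a₂‖ / g := by field_simp; ring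

end Operator

section Spectral

variable {E : Type*} [NormedAddCommGroup E] [InnerProductSpace ℂ E] [FiniteDimensional ℂ E]

theorem ContinuousLinearMap.hasEigenvalue_iff_mem_spectrum
    {T : E →L[ℂ] E} {μ : ℂ} : Module.End.HasEigenvalue (T : E →ₗ[ℂ] E) μ ↔ μ ∈ spectrum ℂ T := by
  rw [Module.End.hasEigenvalue_iff_mem_spectrum,
    ← AlgEquiv.spectrum_eq (Module.End.toContinuousLinearMap E)]
  rfl

theorem IsSelfAdjoint.mul_norm_le_norm_apply_of_spectral_gap
    {T : E →L[ℂ] E} (hT : IsSelfAdjoint T) {g : ℝ} (hg : 0 ≤ g)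
    (hgap : ∀ μ ∈ spectrum ℂ T, μ ≠ 0 → g ≤ ‖μ‖) {w : E} (hw : w ∈ T.kerᗮ) :
    g * ‖w‖ ≤ ‖T w‖ := by
  have hsym := hT.isSymmetric
  let b := hsym.eigenvectorBasis rfl
  let ev := hsym.eigenvalues rfl
  have hTb (i) : T (b i) = (ev i : ℂ) • b i := hsym.apply_eigenvectorBasis rfl i
  have hcoef (i) : g * ‖⟪b i, w⟫_ℂ‖ ≤ ‖⟪b i, T w⟫_ℂ‖ := by
    rw [← T.adjoint_inner_left, hT.adjoint_eq, hTb, inner_smul_left, norm_mul,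
      Complex.conj_ofReal, Complex.norm_real]
    by_cases h0 : ev i = 0
    · have hbi : b i ∈ T.ker := by simp [hTb, h0]
      simp [hw _ hbi]
    · gcongr
      simpa using hgap _ (ContinuousLinearMap.hasEigenvalue_iff_mem_spectrum.mp
        (hsym.hasEigenvalue_eigenvalues rfl i)) (Complex.ofReal_ne_zero.mpr h0)
  refine (pow_le_pow_iff_left₀ (by positivity) (norm_nonneg _) two_ne_zero).mp ?_
  rw [mul_pow, ← b.sum_sq_norm_inner_right, ← b.sum_sq_norm_inner_right, Finset.mul_sum]
  gcongr with i
  rw [← mul_pow]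
  exact pow_le_pow_left₀ (by positivity) (hcoef i) 2

theorem IsSelfAdjoint.mul_norm_le_norm_mul_of_spectral_gap {T Y : E →L[ℂ] E}
    (hT : IsSelfAdjoint T) {g : ℝ} (hg : 0 < g) (hgap : ∀ μ ∈ spectrum ℂ T, μ ≠ 0 → g ≤ ‖μ‖)
    (hY : ∀ v, Y v ∈ T.kerᗮ) : g * ‖Y‖ ≤ ‖T * Y‖ := by
  rw [← le_div_iff₀' hg]
  refine Y.opNorm_le_bound (by positivity) fun v => ?_
  rw [div_mul_eq_mul_div, le_div_iff₀' hg]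
  exact (hT.mul_norm_le_norm_apply_of_spectral_gap hg.le hgap (hY v)).trans ((T * Y).le_opNorm v)

theorem IsSelfAdjoint.mul_norm_one_sub_mul_le {T p : E →L[ℂ] E} (hT : IsSelfAdjoint T)
    (hp : IsStarProjection p) {r g : ℝ} (hg : 0 < g) (hker : ∀ v, T v = r • v → p v = v)
    (hgap : ∀ μ ∈ spectrum ℂ T, μ ≠ (r : ℂ) → g ≤ ‖μ - r‖) (Y : E →L[ℂ] E) :
    g * ‖(1 - p) * Y‖ ≤ ‖(T - algebraMap ℂ _ r) * ((1 - p) * Y)‖ := by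
  refine (hT.sub (.algebraMap _ (Complex.conj_ofReal r))).mul_norm_le_norm_mul_of_spectral_gap hg
    ?_ fun v u hu => ?_
  · intro μ hμ hμ0
    rw [← spectrum.sub_singleton_eq, Set.sub_singleton] at hμ
    obtain ⟨ν, hν, rfl⟩ := hμ
    exact hgap ν hν (sub_ne_zero.mp hμ0)
  · have hpu : p u = u := hker u (by
      simpa [sub_eq_zero, Algebra.algebraMap_eq_smul_one, Complex.coe_smul] using hu)
    rw [← hpu, mul_apply_eq_comp]
    exact hp.inner_apply_one_sub_apply u (Y v)

end Spectral

theorem spectral_projector_second_deriv_bound_general {n : ℕ}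
    (H H' H'' P P' P'' : ℝ → (EuclideanSpace ℂ (Fin n) →L[ℂ] EuclideanSpace ℂ (Fin n)))
    (lam0 g : ℝ → ℝ)
    (hHderiv : ∀ s, HasDerivAt H (H' s) s)
    (hH'deriv : ∀ s, HasDerivAt H' (H'' s) s)
    (hHsa : ∀ s, ContinuousLinearMap.adjoint (H s) = H s)
    (hPsa : ∀ s, ContinuousLinearMap.adjoint (P s) = P s)
    (hPidem : ∀ s, P s ∘L P s = P s)
    (hPderiv : ∀ s, HasDerivAt P (P' s) s)
    (hP'deriv : ∀ s, HasDerivAt P' (P'' s) s)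
    (heig : ∀ s, H s ∘L P s = lam0 s • P s)
    (hfull : ∀ s, ∀ v, H s v = lam0 s • v → P s v = v)
    (hg : ∀ s, 0 < g s)
    (hgap : ∀ s, ∀ μ ∈ spectrum ℂ (H s), μ ≠ (lam0 s : ℂ) → g s ≤ ‖μ - (lam0 s : ℂ)‖)
    (s : ℝ) :
    ‖P'' s‖ ≤ 8 * ‖H' s‖ ^ 2 / (g s) ^ 2 + 2 * ‖H'' s‖ / g s := by
  have hp (t : ℝ) : IsStarProjection (P t) := ⟨hPidem t, hPsa t⟩
  have hH (t : ℝ) : IsSelfAdjoint (H t) := hHsa t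
  -- `λ₀` is frozen at `s`, so `A` has the derivatives of `H` and commutes with `P` at all times.
  let A (t : ℝ) := H t - algebraMap ℂ _ (lam0 s)
  have hA (t : ℝ) : HasDerivAt A (H' t) t := (hHderiv t).sub_const _
  have hAP (t : ℝ) : Commute (A t) (P t) :=
    ((hH t).commute_of_mul_eq_smul_s9 (hp t).isSelfAdjoint (heig t)).sub_left
      (Algebra.commute_algebraMap_left _ _)
  have hAPs : A s * P s = 0 := by
    simp [A, sub_mul, Algebra.algebraMap_eq_smul_one, Complex.coe_smul,
      show H s * P s = _ from heig s]
  obtain ⟨hd, hd₂⟩ :=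
    deriv_relations_of_isIdempotentElem (fun t => (hp t).isIdempotentElem) hPderiv (hP'deriv s)
  obtain ⟨hc, hc₂⟩ := deriv_relations_of_commute hAP hA hPderiv (hH'deriv s) (hP'deriv s)
  have hP' (t : ℝ) : IsSelfAdjoint (P' t) :=
    .of_hasDerivAt (fun t => (hp t).isSelfAdjoint) (hPderiv t)
  calc ‖P'' s‖ ≤ 8 * ‖H' s‖ ^ 2 / g s ^ 2 + ‖H'' s‖ / g s :=
        (hp s).norm_secondDeriv_le_of_gap (hP' s) (.of_hasDerivAt hP' (hP'deriv s)) (hg s)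
          ((hH s).mul_norm_one_sub_mul_le (hp s) (hg s) (hfull s) (hgap s)) hAPs
          ((hAP s).eq.symm.trans hAPs) hd hd₂ hc hc₂
    _ ≤ _ := by
        rw [mul_div_assoc 2]
        linarith [div_nonneg (norm_nonneg (H'' s)) (hg s).le]

/-- **Second derivative bound on the spectral projector.** Let `H(s)` be a twice
continuously differentiable path of Hermitian operators with an isolated eigenvalue
`λ₀(s)` whose distance to the rest of the spectrum is at least `g(s) > 0`, and let
`P(s)` be the corresponding spectral projector. Then
`‖P''(s)‖ ≤ 8‖H'(s)‖²/g(s)² + 2‖H''(s)‖/g(s)`. -/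
theorem spectral_projector_second_deriv_bound {n : ℕ}
    (H H' H'' P P' P'' : ℝ → (EuclideanSpace ℂ (Fin n) →L[ℂ] EuclideanSpace ℂ (Fin n)))
    (lam0 g : ℝ → ℝ)
    (hHderiv : ∀ s, HasDerivAt H (H' s) s)
    (hH'deriv : ∀ s, HasDerivAt H' (H'' s) s)
    (hH''cont : Continuous H'')
    (hHsa : ∀ s, ContinuousLinearMap.adjoint (H s) = H s)
    (hPsa : ∀ s, ContinuousLinearMap.adjoint (P s) = P s)
    (hPidem : ∀ s, P s ∘L P s = P s)
    (hPderiv : ∀ s, HasDerivAt P (P' s) s)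
    (hP'deriv : ∀ s, HasDerivAt P' (P'' s) s)
    (heig : ∀ s, H s ∘L P s = lam0 s • P s)
    (hfull : ∀ s, ∀ v, H s v = lam0 s • v → P s v = v)
    (hg : ∀ s, 0 < g s)
    (hgap : ∀ s, ∀ μ ∈ spectrum ℂ (H s), μ ≠ (lam0 s : ℂ) → g s ≤ ‖μ - (lam0 s : ℂ)‖)
    (s : ℝ) :
    ‖P'' s‖ ≤ 8 * ‖H' s‖ ^ 2 / (g s) ^ 2 + 2 * ‖H'' s‖ / g s :=
  spectral_projector_second_deriv_bound_general H H' H'' P P' P'' lam0 g hHderiv hH'deriv hHsa hPsa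
    hPidem hPderiv hP'deriv heig hfull hg hgap s
end

section
/- With H and H' as above, if the ground energy of H satisfies 0 < μ₁ ≤ E_0 ≤ 1 - μ₂ < 1, then A_1(H) - 2 A_1(H') ≥ μ₁/(1-μ₁) - (d_0/2^n)·(1/(μ₁ μ₂)). -/
open Finset

/-- The ground energy `E₀` of a diagonal Hamiltonian on `n` qubits, given by its
diagonal entries `e : Fin (2^n) → ℝ`. -/
noncomputable def groundEnergy (n : ℕ) (e : Fin (2 ^ n) → ℝ) : ℝ :=
  Finset.univ.inf' ⟨⟨0, pow_pos (by norm_num : (0 : ℕ) < 2) n⟩, Finset.mem_univ _⟩ e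

/-- `A₁(H) = 2⁻ⁿ ∑_{k=1}^{M-1} d_k/(E_k - E_0)`, written in terms of the diagonal
entries of `H`: `A₁ = 2⁻ⁿ ∑_{i : e i ≠ E₀} 1/(e i - E₀)`. -/
noncomputable def A1diag (n : ℕ) (e : Fin (2 ^ n) → ℝ) : ℝ :=
  ((2 : ℝ) ^ n)⁻¹ *
    ∑ i, if e i = groundEnergy n e then 0 else (e i - groundEnergy n e)⁻¹

/-- The diagonal entries of `H' = H ⊗ (I + σ_z)/2 = H ⊗ |0⟩⟨0|` on `n+1` qubits:
the `|0⟩` sector carries the spectrum of `H`, the `|1⟩` sector carries eigenvalue `0`. -/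
noncomputable def extendDiag (n : ℕ) (e : Fin (2 ^ n) → ℝ) : Fin (2 ^ (n + 1)) → ℝ :=
  fun i => if h : (i : ℕ) < 2 ^ n then e ⟨i, h⟩ else 0

/-!
Since `H'` has ground energy `0` and its excited sector is a copy of the spectrum of `H`,
`2 A₁(H') = 2⁻ⁿ ∑ᵢ 1/eᵢ`, so `A₁(H) - 2 A₁(H')` is the average over `i` of
`1/(eᵢ - E₀) - 1/eᵢ` (with the first term dropped on the ground space). For an excited level
this equals `E₀ / ((eᵢ - E₀) eᵢ) ≥ μ₁/(1 - μ₁)`, since `eᵢ ≤ 1`. On the ground space it is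
`-1/E₀ ≥ -1/μ₁ ≥ μ₁/(1 - μ₁) - 1/(μ₁ (1 - μ₁)) ≥ μ₁/(1 - μ₁) - 1/(μ₁ μ₂)`,
as `μ₂ ≤ 1 - E₀ ≤ 1 - μ₁`.
-/

theorem groundEnergy_le {n : ℕ} (e : Fin (2 ^ n) → ℝ) (i : Fin (2 ^ n)) :
    groundEnergy n e ≤ e i :=
  inf'_le e (mem_univ i)

theorem sum_extendDiag {n : ℕ} (e : Fin (2 ^ n) → ℝ) (f : ℝ → ℝ) :
    ∑ i, f (extendDiag n e i) = ∑ i, f (e i) + 2 ^ n • f 0 := by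
  let g : ℕ → ℝ := fun k => f (if h : k < 2 ^ n then e ⟨k, h⟩ else 0)
  have hlow : ∑ k ∈ range (2 ^ n), g k = ∑ i, f (e i) := by
    rw [← Fin.sum_univ_eq_sum_range]
    exact sum_congr rfl fun i _ => by simp only [g, dif_pos i.isLt]
  have hhigh : ∑ k ∈ range (2 ^ n), g (2 ^ n + k) = 2 ^ n • f 0 := by
    simp [g]
  calc ∑ i, f (extendDiag n e i) = ∑ k ∈ range (2 ^ n + 2 ^ n), g k :=
        Fin.sum_univ_eq_sum_range g (2 ^ (n + 1)) |>.trans (by rw [pow_succ, mul_two])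
    _ = ∑ i, f (e i) + 2 ^ n • f 0 := by rw [sum_range_add, hlow, hhigh]

theorem groundEnergy_extendDiag {n : ℕ} {e : Fin (2 ^ n) → ℝ} (he : ∀ i, 0 ≤ e i) :
    groundEnergy (n + 1) (extendDiag n e) = 0 := by
  have hlt : 2 ^ n < 2 ^ (n + 1) := Nat.pow_lt_pow_right one_lt_two n.lt_succ_self
  refine le_antisymm ?_ (le_inf' _ _ fun i _ => ?_)
  · simpa [extendDiag] using groundEnergy_le (extendDiag n e) ⟨2 ^ n, hlt⟩
  · unfold extendDiag
    split
    · exact he _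
    · exact le_rfl

-- The ground terms that `A1diag` drops are the `x = 0` ones, where `x⁻¹ = 0` anyway.
theorem two_mul_A1diag_extendDiag {n : ℕ} {e : Fin (2 ^ n) → ℝ} (he : ∀ i, 0 ≤ e i) :
    2 * A1diag (n + 1) (extendDiag n e) = ((2 : ℝ) ^ n)⁻¹ * ∑ i, (e i)⁻¹ := by
  have hsummand (x : ℝ) : (if x = 0 then 0 else (x - 0)⁻¹) = x⁻¹ := by
    split_ifs with hx <;> simp [hx]
  rw [A1diag, groundEnergy_extendDiag he]
  simp only [hsummand]
  rw [sum_extendDiag e fun x => x⁻¹, inv_zero, smul_zero, add_zero, pow_succ]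
  field_simp

theorem A1diag_sub_two_mul_A1diag_extendDiag {n : ℕ} {e : Fin (2 ^ n) → ℝ}
    (he : ∀ i, 0 ≤ e i) :
    A1diag n e - 2 * A1diag (n + 1) (extendDiag n e) = ((2 : ℝ) ^ n)⁻¹ *
      ∑ i, ((if e i = groundEnergy n e then 0 else (e i - groundEnergy n e)⁻¹) - (e i)⁻¹) := by
  rw [A1diag, two_mul_A1diag_extendDiag he, ← mul_sub, ← sum_sub_distrib]

theorem div_one_sub_le_inv_sub_sub_inv {μ E x : ℝ} (hμ : 0 < μ) (hμE : μ ≤ E) (hEx : E < x)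
    (hx : x ≤ 1) : μ / (1 - μ) ≤ (x - E)⁻¹ - x⁻¹ := by
  have hE : 0 < E := hμ.trans_le hμE
  have hgap : 0 < x - E := sub_pos.2 hEx
  have hx0 : 0 < x := hE.trans hEx
  calc μ / (1 - μ) ≤ E / ((x - E) * x) :=
        div_le_div₀ hE.le hμE (mul_pos hgap hx0) (by nlinarith)
    _ = (x - E)⁻¹ - x⁻¹ := by field_simp; ring

theorem div_one_sub_sub_one_div_mul_le_neg_inv {μ₁ μ₂ E : ℝ} (hμ₁ : 0 < μ₁) (hμ₂ : 0 < μ₂)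
    (hlo : μ₁ ≤ E) (hhi : E ≤ 1 - μ₂) : μ₁ / (1 - μ₁) - 1 / (μ₁ * μ₂) ≤ -E⁻¹ := by
  have hμ₁' : 0 < 1 - μ₁ := by linarith
  have hμ₂le : μ₂ ≤ 1 - μ₁ := by linarith
  calc μ₁ / (1 - μ₁) - 1 / (μ₁ * μ₂) ≤ μ₁ / (1 - μ₁) - 1 / (μ₁ * (1 - μ₁)) := by
        gcongr
    _ = -μ₁⁻¹ - 1 := by field_simp; ring
    _ ≤ -E⁻¹ := by linarith [inv_anti₀ hμ₁ hlo]

theorem A1_ground_nonzero_general (n : ℕ) (e : Fin (2 ^ n) → ℝ)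
    (he : ∀ i, 0 ≤ e i ∧ e i ≤ 1)
    (μ1 μ2 : ℝ) (hμ1 : 0 < μ1) (hμ2 : 0 < μ2)
    (hlo : μ1 ≤ groundEnergy n e) (hhi : groundEnergy n e ≤ 1 - μ2) :
    A1diag n e - 2 * A1diag (n + 1) (extendDiag n e) ≥
      μ1 / (1 - μ1) -
        (((Finset.univ.filter (fun i => e i = groundEnergy n e)).card : ℝ) / 2 ^ n) *
          (1 / (μ1 * μ2)) := by
  set E0 := groundEnergy n e
  have hterm (i : Fin (2 ^ n)) : μ1 / (1 - μ1) - (if e i = E0 then 1 / (μ1 * μ2) else 0) ≤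
      (if e i = E0 then 0 else (e i - E0)⁻¹) - (e i)⁻¹ := by
    split_ifs with hi
    · simpa [hi] using div_one_sub_sub_one_div_mul_le_neg_inv hμ1 hμ2 hlo hhi
    · simpa using div_one_sub_le_inv_sub_sub_inv hμ1 hlo
        ((groundEnergy_le e i).lt_of_ne (Ne.symm hi)) (he i).2
  have hsum := sum_le_sum fun i (_ : i ∈ univ) => hterm i
  rw [sum_sub_distrib, sum_const, ← sum_filter, sum_const, card_univ, Fintype.card_fin,
    nsmul_eq_mul, nsmul_eq_mul] at hsum
  rw [A1diag_sub_two_mul_A1diag_extendDiag fun i => (he i).1, ge_iff_le]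
  calc μ1 / (1 - μ1) - _ * (1 / (μ1 * μ2)) = ((2 : ℝ) ^ n)⁻¹ * (_ - _) := by
        push_cast; field_simp
    _ ≤ _ := mul_le_mul_of_nonneg_left hsum (by positivity)

/-- If the ground energy of `H` satisfies `0 < μ₁ ≤ E₀ ≤ 1 - μ₂ < 1`, then
`A₁(H) - 2 A₁(H') ≥ μ₁/(1-μ₁) - (d₀/2ⁿ)·(1/(μ₁ μ₂))`, where `d₀` is the ground-state
degeneracy of `H`. -/
theorem A1_ground_nonzero (n : ℕ) (e : Fin (2 ^ n) → ℝ)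
    (he : ∀ i, 0 ≤ e i ∧ e i ≤ 1)
    (μ1 μ2 : ℝ) (hμ1 : 0 < μ1) (hμ2 : 0 < μ2) (hμ2' : μ2 < 1)
    (hlo : μ1 ≤ groundEnergy n e) (hhi : groundEnergy n e ≤ 1 - μ2) :
    A1diag n e - 2 * A1diag (n + 1) (extendDiag n e) ≥
      μ1 / (1 - μ1) -
        (((Finset.univ.filter (fun i => e i = groundEnergy n e)).card : ℝ) / 2 ^ n) *
          (1 / (μ1 * μ2)) :=
  A1_ground_nonzero_general n e he μ1 μ2 hμ1 hμ2 hlo hhi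
end

section
/- (Paturi's lemma) Let P be a real polynomial with deg(P) ≤ M and suppose |P(i)| ≤ c for all integers i ∈ {0, 1, ..., M}. Then for all x ∈ [0, M], |P(x)| ≤ c · 2^M. -/
open Finset Polynomial

private lemma aux_prod_sub (n : ℕ) : ∏ j ∈ range n, (n - j) = n.factorial := by
  rw [← Finset.prod_range_add_one_eq_factorial n,
    ← Finset.prod_range_reflect (fun j => j + 1) n]
  exact Finset.prod_congr rfl fun j hj => by
    rw [Finset.mem_range] at hj; omega

private lemma aux_prod_Ico (i M : ℕ) : ∏ j ∈ Finset.Ico (i+1) (M+1), (j - i) = (M - i).factorial := by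
  rcases le_or_gt i M with h | h
  · rw [Finset.prod_Ico_eq_prod_range]
    have : M + 1 - (i + 1) = M - i := by omega
    rw [this, ← Finset.prod_range_add_one_eq_factorial (M - i)]
    exact Finset.prod_congr rfl fun j hj => by omega
  · rw [Finset.Ico_eq_empty (by omega), Finset.prod_empty]
    have : M - i = 0 := by omega
    simp [this]

private lemma aux_fact_le (a b : ℕ) :
    (a+1).factorial * (b+1).factorial ≤ (a+b+1).factorial := by
  induction b with
  | zero => simp [Nat.factorial]
  | succ b ih =>
    calc (a+1).factorial * (b+1+1).factorial
        = ((a+1).factorial * (b+1).factorial) * (b+1+1) := by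
          rw [Nat.factorial_succ (b+1)]; ring
      _ ≤ (a+b+1).factorial * (b+1+1) := Nat.mul_le_mul_right _ ih
      _ ≤ (a+b+1).factorial * (a+b+1+1) := Nat.mul_le_mul_left _ (by omega)
      _ = (a+b+1+1) * (a+b+1).factorial := by ring
      _ = (a+b+1+1).factorial := (Nat.factorial_succ (a+b+1)).symm
      _ = (a+(b+1)+1).factorial := by congr 1

/-- The denominator product: `∏_{j ≤ M, j ≠ i} |i - j| = i! (M-i)!`. -/
private lemma aux_denom (M i : ℕ) (hi : i ≤ M) :
    ∏ j ∈ (Finset.range (M+1)).erase i, |(i : ℝ) - (j : ℝ)|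
      = (i.factorial * (M - i).factorial : ℕ) := by
  have hsplit : (Finset.range (M+1)).erase i
      = Finset.range i ∪ Finset.Ico (i+1) (M+1) := by
    ext j
    simp only [Finset.mem_erase, Finset.mem_range, Finset.mem_union, Finset.mem_Ico]
    omega
  have hdisj : Disjoint (Finset.range i) (Finset.Ico (i+1) (M+1)) := by
    rw [Finset.disjoint_left]
    intro j hj hj'
    simp only [Finset.mem_range] at hj
    simp only [Finset.mem_Ico] at hj'
    omega
  rw [hsplit, Finset.prod_union hdisj]
  have h1 : ∏ j ∈ Finset.range i, |(i : ℝ) - (j : ℝ)| = (i.factorial : ℝ) := by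
    rw [← aux_prod_sub i, Nat.cast_prod]
    refine Finset.prod_congr rfl fun j hj => ?_
    rw [Finset.mem_range] at hj
    rw [Nat.cast_sub hj.le, abs_of_nonneg (by
      have := (Nat.cast_le (α := ℝ)).mpr hj.le; linarith)]
  have h2 : ∏ j ∈ Finset.Ico (i+1) (M+1), |(i : ℝ) - (j : ℝ)|
      = ((M - i).factorial : ℝ) := by
    rw [← aux_prod_Ico i M, Nat.cast_prod]
    refine Finset.prod_congr rfl fun j hj => ?_
    rw [Finset.mem_Ico] at hj
    have hij : i ≤ j := by omega
    rw [Nat.cast_sub hij, abs_sub_comm, abs_of_nonneg (by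
      have := (Nat.cast_le (α := ℝ)).mpr hij; linarith)]
  rw [h1, h2, Nat.cast_mul]

/-- The numerator product: for `x ∈ [0, M]`, `∏_{j ≤ M, j ≠ i} |x - j| ≤ M!`. -/
private lemma aux_numer (M : ℕ) (hM : 1 ≤ M) (i : ℕ) (x : ℝ)
    (hx0 : 0 ≤ x) (hxM : x ≤ (M : ℝ)) :
    ∏ j ∈ (Finset.range (M+1)).erase i, |x - (j : ℝ)| ≤ (M.factorial : ℝ) := by
  set k : ℕ := min ⌊x⌋₊ (M - 1) with hk
  have hkM : k ≤ M - 1 := min_le_right _ _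
  have hkx : (k : ℝ) ≤ x := by
    rcases le_or_gt (⌊x⌋₊) (M-1) with h | h
    · have : k = ⌊x⌋₊ := by omega
      rw [this]; exact Nat.floor_le hx0
    · have hk' : k = M - 1 := by omega
      have : (M - 1 : ℕ) ≤ ⌊x⌋₊ := by omega
      calc (k : ℝ) = ((M-1 : ℕ) : ℝ) := by rw [hk']
        _ ≤ (⌊x⌋₊ : ℝ) := Nat.cast_le.mpr this
        _ ≤ x := Nat.floor_le hx0
  have hxk1 : x ≤ (k : ℝ) + 1 := by
    rcases le_or_gt (⌊x⌋₊) (M-1) with h | h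
    · have : k = ⌊x⌋₊ := by omega
      rw [this]; exact le_of_lt (Nat.lt_floor_add_one x)
    · have hk' : k = M - 1 := by omega
      have : ((M - 1 : ℕ) : ℝ) + 1 = (M : ℝ) := by
        rw [Nat.cast_sub hM]; push_cast; ring
      rw [hk', this]; exact hxM
  -- integer bound function
  set b : ℕ → ℕ := fun j => if j ≤ k then k + 1 - j else j - k with hb
  have hbound : ∀ j : ℕ, |x - (j : ℝ)| ≤ (b j : ℝ) := by
    intro j
    rw [abs_sub_le_iff]
    by_cases hjk : j ≤ k
    · have hbj : b j = k + 1 - j := by simp only [hb]; rw [if_pos hjk]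
      have hjle : (j : ℝ) ≤ (k : ℝ) := Nat.cast_le.mpr hjk
      rw [hbj, Nat.cast_sub (by omega)]
      push_cast
      constructor <;> linarith
    · have hbj : b j = j - k := by simp only [hb]; rw [if_neg hjk]
      have hjge : (k : ℝ) + 1 ≤ (j : ℝ) := by
        have : k + 1 ≤ j := by omega
        calc (k : ℝ) + 1 = ((k + 1 : ℕ) : ℝ) := by push_cast; ring
          _ ≤ (j : ℝ) := Nat.cast_le.mpr this
      rw [hbj, Nat.cast_sub (by omega)]
      constructor <;> linarith
  have hb1 : ∀ j : ℕ, 1 ≤ b j := by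
    intro j
    by_cases hjk : j ≤ k
    · simp only [hb]; rw [if_pos hjk]; omega
    · simp only [hb]; rw [if_neg hjk]; omega
  have step1 : ∏ j ∈ (Finset.range (M+1)).erase i, |x - (j : ℝ)|
      ≤ ∏ j ∈ (Finset.range (M+1)).erase i, (b j : ℝ) :=
    Finset.prod_le_prod (fun j _ => abs_nonneg _) (fun j _ => hbound j)
  have step2 : ∏ j ∈ (Finset.range (M+1)).erase i, b j
      ≤ ∏ j ∈ Finset.range (M+1), b j :=
    Finset.prod_le_prod_of_subset_of_one_le' (Finset.erase_subset _ _)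
      (fun j _ _ => hb1 j)
  have step3 : ∏ j ∈ Finset.range (M+1), b j
      = (k+1).factorial * (M - k).factorial := by
    rw [Finset.range_eq_Ico, ← Finset.prod_Ico_consecutive _ (by omega : 0 ≤ k+1)
      (by omega : k + 1 ≤ M + 1)]
    congr 1
    · rw [← Finset.range_eq_Ico, ← aux_prod_sub (k+1)]
      refine Finset.prod_congr rfl fun j hj => ?_
      rw [Finset.mem_range] at hj
      have hjk : j ≤ k := by omega
      simp only [hb]; rw [if_pos hjk]
    · rw [← aux_prod_Ico k M]
      refine Finset.prod_congr rfl fun j hj => ?_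
      rw [Finset.mem_Ico] at hj
      have hjk : ¬ j ≤ k := by omega
      simp only [hb]; rw [if_neg hjk]
  have step4 : (k+1).factorial * (M - k).factorial ≤ M.factorial := by
    have h := aux_fact_le k (M - 1 - k)
    have e1 : M - 1 - k + 1 = M - k := by omega
    have e2 : k + (M - 1 - k) + 1 = M := by omega
    rw [e1, e2] at h
    exact h
  calc ∏ j ∈ (Finset.range (M+1)).erase i, |x - (j : ℝ)|
      ≤ ∏ j ∈ (Finset.range (M+1)).erase i, (b j : ℝ) := step1
    _ = ((∏ j ∈ (Finset.range (M+1)).erase i, b j : ℕ) : ℝ) := by rw [Nat.cast_prod]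
    _ ≤ (M.factorial : ℝ) := by
        exact_mod_cast le_trans step2 (step3 ▸ step4)

/-- **Paturi's lemma.** Let `P` be a real polynomial with `deg P ≤ M` and suppose
`|P(i)| ≤ c` for all integers `i ∈ {0, 1, ..., M}`. Then for all `x ∈ [0, M]`,
`|P(x)| ≤ c · 2^M`. -/
theorem paturi_lemma (M : ℕ) (c : ℝ) (P : Polynomial ℝ)
    (hdeg : P.natDegree ≤ M)
    (hbound : ∀ i : ℕ, i ≤ M → |P.eval (i : ℝ)| ≤ c) :
    ∀ x ∈ Set.Icc (0 : ℝ) (M : ℝ), |P.eval x| ≤ c * 2 ^ M := by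
  intro x hx
  obtain ⟨hx0, hxM⟩ := hx
  have hc : 0 ≤ c := le_trans (abs_nonneg _) (hbound 0 (Nat.zero_le _))
  rcases Nat.eq_zero_or_pos M with hM0 | hM1
  · subst hM0
    have hx' : x = 0 := le_antisymm (by simpa using hxM) hx0
    subst hx'
    simpa using hbound 0 le_rfl
  set v : ℕ → ℝ := fun i => (i : ℝ) with hv
  have hvs : Set.InjOn v (Finset.range (M+1)) :=
    fun a _ b _ h => Nat.cast_injective h
  have hdeg' : P.degree < (#(Finset.range (M+1)) : ℕ) := by
    rw [Finset.card_range]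
    exact lt_of_le_of_lt P.degree_le_natDegree
      (by exact_mod_cast Nat.lt_succ_of_le hdeg)
  have hP := Lagrange.eq_interpolate (v := v) hvs hdeg'
  -- bound on each Lagrange basis polynomial
  have hbasis : ∀ i ∈ Finset.range (M+1),
      |(Lagrange.basis (Finset.range (M+1)) v i).eval x| ≤ (M.choose i : ℝ) := by
    intro i hi
    rw [Finset.mem_range] at hi
    have hiM : i ≤ M := by omega
    have heval : (Lagrange.basis (Finset.range (M+1)) v i).eval x
        = ∏ j ∈ (Finset.range (M+1)).erase i, (((i:ℝ) - j)⁻¹ * (x - j)) := by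
      rw [Lagrange.basis, Polynomial.eval_prod]
      refine Finset.prod_congr rfl fun j hj => ?_
      simp [Lagrange.basisDivisor, hv]
    rw [heval, Finset.abs_prod]
    have habs : ∀ j ∈ (Finset.range (M+1)).erase i,
        |((i:ℝ) - j)⁻¹ * (x - j)| = |(i:ℝ) - j|⁻¹ * |x - j| := by
      intro j hj
      rw [abs_mul, abs_inv]
    rw [Finset.prod_congr rfl habs, Finset.prod_mul_distrib,
      Finset.prod_inv_distrib, aux_denom M i hiM]
    have hnum := aux_numer M hM1 i x hx0 hxM
    have hfac : (0:ℝ) < ((i.factorial * (M - i).factorial : ℕ) : ℝ) := by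
      positivity
    have hkey : (M.choose i : ℝ) * ((i.factorial * (M - i).factorial : ℕ) : ℝ)
        = (M.factorial : ℝ) := by
      rw [← Nat.cast_mul]
      congr 1
      rw [← Nat.choose_mul_factorial_mul_factorial hiM]
      ring
    rw [inv_mul_le_iff₀ hfac, mul_comm, hkey]
    exact hnum
  -- assemble
  have hsum : P.eval x = ∑ i ∈ Finset.range (M+1),
      P.eval (i : ℝ) * (Lagrange.basis (Finset.range (M+1)) v i).eval x := by
    conv_lhs => rw [hP]
    rw [Lagrange.interpolate_apply, Polynomial.eval_finset_sum]
    exact Finset.sum_congr rfl fun i hi => by rw [Polynomial.eval_mul, Polynomial.eval_C]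
  calc |P.eval x|
      ≤ ∑ i ∈ Finset.range (M+1),
        |P.eval (i : ℝ) * (Lagrange.basis (Finset.range (M+1)) v i).eval x| := by
        rw [hsum]; exact Finset.abs_sum_le_sum_abs _ _
    _ ≤ ∑ i ∈ Finset.range (M+1), c * (M.choose i : ℝ) := by
        refine Finset.sum_le_sum fun i hi => ?_
        rw [abs_mul]
        have hiM : i ≤ M := by rw [Finset.mem_range] at hi; omega
        exact mul_le_mul (hbound i hiM) (hbasis i hi) (abs_nonneg _) hc
    _ = c * 2 ^ M := by
        rw [← Finset.mul_sum, ← Nat.cast_sum]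
        norm_num [Nat.sum_range_choose]
end
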